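/- Fix an integer d ≥ 1 and define the bounded sequence a : ℕ → ℝ by a_n := ∫_{(n·log 2)/d}^{((n+1)·log 2)/d} sin( z / log z ) dz. Then a is not almost convergent to zero; that is, there exists a Banach limit B with B(a) ≠ 0. -/

import Mathlib

/-!
Write `φ z = z / log z`. Beyond `A ≥ e` the function `φ` is increasing with slope at most
`1 / log A`, and `φ z → ∞`; so for every length `K` there are windows `[z₀, z₀ + K]`, as far out
as we like, on which `φ` stays in `[π / 6, π / 2]` modulo `2π` and hence `sin ∘ φ ≥ 1 / 2`.
With `L = log 2 / d`, the sequence `a` therefore has arbitrarily long runs of terms `≥ L / 2`.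
An ultrafilter limit of averages of `a` over longer and longer such runs is a Banach limit
(shifting a window of length `k` changes its average by `O(1 / k)`) and takes a value `≥ L / 2`.
-/

/-- Membership in `l_∞`: the sequence is bounded. -/
def Bdd (x : ℕ → ℝ) : Prop := ∃ M : ℝ, ∀ n : ℕ, |x n| ≤ M

/-- The right shift `S` on sequences: `(Sx)_0 = 0`, `(Sx)_{n+1} = x_n`. -/
def Sfun (x : ℕ → ℝ) : ℕ → ℝ
  | 0 => 0
  | n + 1 => x n

/-- `B` is a Banach limit on `l_∞`: a positive, normalised, shift-invariant linear
functional. -/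
def IsBanachLimit (B : (ℕ → ℝ) → ℝ) : Prop :=
  (∀ x y : ℕ → ℝ, Bdd x → Bdd y → B (x + y) = B x + B y) ∧
  (∀ (c : ℝ) (x : ℕ → ℝ), Bdd x → B (c • x) = c * B x) ∧
  (∀ x : ℕ → ℝ, Bdd x → 0 ≤ x → 0 ≤ B x) ∧
  B (fun _ => (1 : ℝ)) = 1 ∧
  (∀ x : ℕ → ℝ, Bdd x → B (Sfun x) = B x)

open Filter Finset Real Set Topology

noncomputable def windowAvg (x : ℕ → ℝ) (m k : ℕ) : ℝ := (∑ i ∈ range (k + 1), x (m + i)) / (k + 1)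

section windowAvg

variable {x y : ℕ → ℝ} {m k : ℕ}

lemma windowAvg_add : windowAvg (x + y) m k = windowAvg x m k + windowAvg y m k := by
  simp only [windowAvg, Pi.add_apply, sum_add_distrib, add_div]

lemma windowAvg_smul (c : ℝ) : windowAvg (c • x) m k = c * windowAvg x m k := by
  simp only [windowAvg, Pi.smul_apply, smul_eq_mul, ← mul_sum, mul_div_assoc]

lemma windowAvg_const (c : ℝ) : windowAvg (fun _ => c) m k = c := by
  simp only [windowAvg, sum_const, card_range, nsmul_eq_mul]
  field_simp
  push_cast
  ring

lemma windowAvg_mono (h : ∀ i ≤ k, x (m + i) ≤ y (m + i)) : windowAvg x m k ≤ windowAvg y m k :=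
  div_le_div_of_nonneg_right
    (sum_le_sum fun i hi => h i (Nat.lt_succ_iff.mp (mem_range.mp hi))) (by positivity)

lemma le_windowAvg {c : ℝ} (h : ∀ i ≤ k, c ≤ x (m + i)) : c ≤ windowAvg x m k :=
  windowAvg_const (m := m) (k := k) c ▸ windowAvg_mono h

lemma abs_windowAvg_le {M : ℝ} (hM : ∀ n, |x n| ≤ M) : |windowAvg x m k| ≤ M :=
  abs_le.mpr ⟨le_windowAvg fun _ _ => (abs_le.mp (hM _)).1,
    windowAvg_const (m := m) (k := k) M ▸ windowAvg_mono fun _ _ => (abs_le.mp (hM _)).2⟩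

lemma windowAvg_sfun_succ : windowAvg (Sfun x) (m + 1) k = windowAvg x m k := by
  simp only [windowAvg, show ∀ i, m + 1 + i = m + i + 1 from fun i => by omega, Sfun]

lemma windowAvg_succ_sub :
    windowAvg x (m + 1) k - windowAvg x m k = (x (m + k + 1) - x m) / (k + 1) := by
  rw [windowAvg, windowAvg, div_sub_div_same, sum_range_succ, sum_range_succ' _ k]
  simp only [add_assoc, add_zero, add_comm 1]
  ring_nf

end windowAvg

lemma tendsto_limUnder_of_abs_le {α : Type*} (U : Ultrafilter α) {f : α → ℝ} {M : ℝ}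
    (hf : ∀ a, |f a| ≤ M) : Tendsto f U (𝓝 (limUnder (U : Filter α) f)) := by
  obtain ⟨y, -, hy⟩ := isCompact_Icc.ultrafilter_le_nhds (U.map f)
    (le_principal_iff.mpr (mem_map.mpr (univ_mem' fun a => abs_le.mp (hf a))))
  exact tendsto_nhds_limUnder ⟨y, hy⟩

/-- Starting the windows at `s k + 1` makes the window averages of `Sfun x` window averages of
`x` again. -/
noncomputable def windowLimit (s : ℕ → ℕ) (x : ℕ → ℝ) : ℝ :=
  limUnder (Ultrafilter.of (atTop : Filter ℕ) : Filter ℕ) fun k => windowAvg x (s k + 1) k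

section windowLimit

variable (s : ℕ → ℕ) {x : ℕ → ℝ}

lemma windowLimit_eq_of_tendsto {a : ℝ}
    (h : Tendsto (fun k => windowAvg x (s k + 1) k) (Ultrafilter.of (atTop : Filter ℕ)) (𝓝 a)) :
    windowLimit s x = a :=
  h.limUnder_eq

lemma tendsto_windowLimit (hx : Bdd x) :
    Tendsto (fun k => windowAvg x (s k + 1) k) (Ultrafilter.of (atTop : Filter ℕ))
      (𝓝 (windowLimit s x)) :=
  let ⟨_, hM⟩ := hx
  tendsto_limUnder_of_abs_le _ fun _ => abs_windowAvg_le hM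

lemma windowLimit_sfun (hx : Bdd x) : windowLimit s (Sfun x) = windowLimit s x := by
  obtain ⟨M, hM⟩ := hx
  have hsmall : Tendsto (fun k => windowAvg x (s k) k - windowAvg x (s k + 1) k)
      (Ultrafilter.of (atTop : Filter ℕ)) (𝓝 0) := by
    have hbound : Tendsto (fun k : ℕ => 2 * M * (1 / ((k : ℝ) + 1))) atTop (𝓝 0) := by
      simpa using tendsto_one_div_add_atTop_nhds_zero_nat.const_mul (2 * M)
    refine squeeze_zero_norm (fun k => ?_) (hbound.mono_left (Ultrafilter.of_le _))
    rw [Real.norm_eq_abs, abs_sub_comm, windowAvg_succ_sub, abs_div,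
      abs_of_pos (by positivity : (0 : ℝ) < k + 1), ← mul_one_div]
    gcongr
    linarith [abs_sub (x (s k + k + 1)) (x (s k)), hM (s k + k + 1), hM (s k)]
  refine windowLimit_eq_of_tendsto s ?_
  simpa only [windowAvg_sfun_succ, add_sub_cancel, add_zero] using
    (tendsto_windowLimit s ⟨M, hM⟩).add hsmall

lemma isBanachLimit_windowLimit : IsBanachLimit (windowLimit s) := by
  refine ⟨fun x y hx hy => ?_, fun c x hx => ?_, fun x hx hpos => ?_, ?_,
    fun x hx => windowLimit_sfun s hx⟩
  · refine windowLimit_eq_of_tendsto s ?_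
    simpa only [windowAvg_add] using (tendsto_windowLimit s hx).add (tendsto_windowLimit s hy)
  · refine windowLimit_eq_of_tendsto s ?_
    simpa only [windowAvg_smul] using (tendsto_windowLimit s hx).const_mul c
  · exact ge_of_tendsto' (tendsto_windowLimit s hx) fun k => le_windowAvg fun i _ => hpos _
  · exact windowLimit_eq_of_tendsto s (by simpa only [windowAvg_const] using tendsto_const_nhds)

lemma le_windowLimit {c : ℝ} (hx : Bdd x) (h : ∀ k, ∀ i ≤ k, c ≤ x (s k + 1 + i)) :
    c ≤ windowLimit s x :=
  ge_of_tendsto' (tendsto_windowLimit s hx) fun k => le_windowAvg (h k)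

end windowLimit

theorem exists_isBanachLimit_le_of_forall_exists_run {x : ℕ → ℝ} {c : ℝ} (hx : Bdd x)
    (h : ∀ k, ∃ m, ∀ i < k, c ≤ x (m + i)) : ∃ B, IsBanachLimit B ∧ c ≤ B x := by
  choose s hs using fun k => h (k + 2)
  refine ⟨windowLimit s, isBanachLimit_windowLimit s, le_windowLimit s hx fun k i hi => ?_⟩
  simpa only [add_assoc] using hs k (1 + i) (by omega)

lemma tendsto_div_log_atTop : Tendsto (fun x : ℝ => x / log x) atTop atTop := by
  refine ((tendsto_exp_div_pow_atTop 1).comp tendsto_log_atTop).congr' ?_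
  filter_upwards [eventually_gt_atTop 0] with x hx
  simp [exp_log hx]

lemma monotoneOn_div_log : MonotoneOn (fun x : ℝ => x / log x) (Ici (exp 1)) := by
  intro y hy z hz hyz
  have hlog : ∀ {w}, w ∈ Ici (exp 1) → 0 < log w / w := fun hw =>
    div_pos (log_pos (one_lt_exp_iff.mpr one_pos |>.trans_le hw)) ((exp_pos 1).trans_le hw)
  simpa only [inv_div] using inv_anti₀ (hlog hz) (log_div_self_antitoneOn hy hz hyz)

lemma continuousOn_div_log : ContinuousOn (fun x : ℝ => x / log x) (Ici (exp 1)) :=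
  continuousOn_id.div (continuousOn_log.mono fun _ hx => ((exp_pos 1).trans_le hx).ne')
    fun _ hx => (log_pos ((one_lt_exp_iff.mpr one_pos).trans_le hx)).ne'

lemma half_le_sin_of_mem_Icc {θ : ℝ} (hθ : θ ∈ Icc (π / 6) (π / 2)) : 1 / 2 ≤ sin θ :=
  sin_pi_div_six ▸ sin_le_sin_of_le_of_le_pi_div_two (by linarith [pi_pos]) hθ.2 hθ.1

theorem exists_forall_mem_Icc_half_le_sin_div_log (K R : ℝ) :
    ∃ z₀, R ≤ z₀ ∧ ∀ z ∈ Icc z₀ (z₀ + K), 1 / 2 ≤ sin (z / log z) := by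
  set A := max (max R (exp 1)) (exp (3 * K / π))
  have hA : exp 1 ≤ A := (le_max_right _ _).trans (le_max_left _ _)
  have hlogA : 1 ≤ log A := by rwa [le_log_iff_exp_le ((exp_pos 1).trans_le hA)]
  have hKA : K / log A ≤ π / 3 := by
    have : 3 * K / π ≤ log A := (le_log_iff_exp_le ((exp_pos 1).trans_le hA)).mpr (le_max_right _ _)
    rw [div_le_iff₀ (by linarith)]
    rw [div_le_iff₀ pi_pos] at this
    linarith
  set N := ⌈A / log A⌉₊
  set T := π / 6 + N * (2 * π) with hT
  have hAT : A / log A ≤ T := calc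
    A / log A ≤ N := Nat.le_ceil _
    _ ≤ N * (2 * π) := le_mul_of_one_le_right N.cast_nonneg (by linarith [pi_gt_three])
    _ ≤ T := by linarith [pi_pos]
  obtain ⟨X, hTX, hAX⟩ :=
    ((tendsto_div_log_atTop.eventually_ge_atTop T).and (eventually_ge_atTop A)).exists
  obtain ⟨z₀, hz₀, hz₀T⟩ := intermediate_value_Icc hAX
    (continuousOn_div_log.mono fun _ hz => hA.trans hz.1) ⟨hAT, hTX⟩
  have hAz₀ : A ≤ z₀ := hz₀.1
  replace hz₀T : z₀ / log z₀ = T := hz₀T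
  refine ⟨z₀, (le_max_left _ _).trans ((le_max_left _ _).trans hAz₀), fun z ⟨hz₀z, hzK⟩ => ?_⟩
  have hlogz₀ : log A ≤ log z₀ := log_le_log (by linarith [exp_pos 1]) hAz₀
  have hlower : T ≤ z / log z :=
    hz₀T ▸ monotoneOn_div_log (hA.trans hAz₀) (hA.trans (hAz₀.trans hz₀z)) hz₀z
  have hupper : z / log z ≤ T + π / 3 := calc
    z / log z ≤ z / log z₀ :=
      div_le_div_of_nonneg_left (by linarith [exp_pos 1]) (by linarith)
        (log_le_log (by linarith [exp_pos 1]) hz₀z)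
    _ = z₀ / log z₀ + (z - z₀) / log z₀ := by ring
    _ ≤ T + K / log A := by
      rw [hz₀T]
      gcongr <;> linarith
    _ ≤ T + π / 3 := by linarith
  rw [← sin_sub_nat_mul_two_pi _ N]
  exact half_le_sin_of_mem_Icc ⟨by linarith, by linarith⟩

lemma intervalIntegrable_sin_comp {g : ℝ → ℝ} (hg : Measurable g) (a b : ℝ) :
    IntervalIntegrable (fun z => sin (g z)) MeasureTheory.volume a b :=
  (intervalIntegrable_const (c := (1 : ℝ))).mono_fun (measurable_sin.comp hg).aestronglyMeasurable
    (MeasureTheory.ae_of_all _ fun z => by simpa using abs_sin_le_one (g z))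

lemma bdd_integral_sin_comp (g : ℝ → ℝ) (L : ℝ) :
    Bdd fun n : ℕ => ∫ z in (n : ℝ) * L..((n : ℝ) + 1) * L, sin (g z) := by
  refine ⟨|L|, fun n => ?_⟩
  have := intervalIntegral.norm_integral_le_of_norm_le_const (C := 1)
    (f := fun z => sin (g z)) (a := (n : ℝ) * L) (b := ((n : ℝ) + 1) * L)
    fun z _ => abs_sin_le_one (g z)
  rwa [norm_eq_abs, one_mul, ← sub_mul, add_sub_cancel_left, one_mul] at this

lemma exists_run_half_le_integral_sin_div_log {L : ℝ} (hL : 0 < L) (k : ℕ) :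
    ∃ m : ℕ, ∀ i < k,
      L / 2 ≤ ∫ z in ((m + i : ℕ) : ℝ) * L..(((m + i : ℕ) : ℝ) + 1) * L, sin (z / log z) := by
  obtain ⟨z₀, hz₀, hsin⟩ := exists_forall_mem_Icc_half_le_sin_div_log ((k + 1) * L) 0
  refine ⟨⌈z₀ / L⌉₊, fun i hi => ?_⟩
  have hm₁ : z₀ ≤ ⌈z₀ / L⌉₊ * L := (div_le_iff₀ hL).mp (Nat.le_ceil _)
  have hm₂ : ⌈z₀ / L⌉₊ * L ≤ z₀ + L := by
    have := (Nat.ceil_lt_add_one (div_nonneg hz₀ hL.le)).le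
    rwa [div_add_one hL.ne', le_div_iff₀ hL] at this
  have hik : (i : ℝ) + 1 ≤ k := by exact_mod_cast hi
  have hi₀ : (0 : ℝ) ≤ i := i.cast_nonneg
  push_cast
  calc L / 2 = ∫ _ in (⌈z₀ / L⌉₊ + i : ℝ) * L..(⌈z₀ / L⌉₊ + i + 1) * L, (1 / 2 : ℝ) := by
        simp only [intervalIntegral.integral_const, smul_eq_mul]
        ring
    _ ≤ _ := intervalIntegral.integral_mono_on (by nlinarith) intervalIntegrable_const
        (intervalIntegrable_sin_comp (measurable_id.div measurable_log) _ _)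
        fun z hz => hsin z ⟨by nlinarith [hz.1], by nlinarith [hz.2]⟩

/-- For a fixed integer `d ≥ 1`, the bounded sequence
`a_n = ∫_{n log 2 / d}^{(n+1) log 2 / d} sin(z / log z) dz`
is not almost convergent to zero: there is a Banach limit `B` with `B(a) ≠ 0`. -/
theorem stmt_19 (d : ℕ) (hd : 1 ≤ d) :
    ∃ B : (ℕ → ℝ) → ℝ, IsBanachLimit B ∧
      B (fun n => ∫ z in ((n : ℝ) * Real.log 2 / d)..(((n : ℝ) + 1) * Real.log 2 / d),
          Real.sin (z / Real.log z)) ≠ 0 := by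
  have hL : 0 < Real.log 2 / d := div_pos (log_pos one_lt_two) (by exact_mod_cast hd)
  simp only [mul_div_assoc]
  obtain ⟨B, hB, hBa⟩ := exists_isBanachLimit_le_of_forall_exists_run
    (bdd_integral_sin_comp _ _) (exists_run_half_le_integral_sin_div_log hL)
  exact ⟨B, hB, ((half_pos hL).trans_le hBa).ne'⟩
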